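/- Let G=(V,E) be a finite simple graph and uv ∈ E. The set F = {x ∈ COR(G) : x_u = x_{uv} = x_v} is a face of COR(G), and there is an affine map taking F onto the correlation polytope COR(G / uv) of the graph obtained from G by contracting the edge uv. Consequently xc(COR(G / uv)) ≤ xc(COR(G)). -/

import Mathlib

open Set

noncomputable section

/-- A polytope in `ℝ^ι`: the convex hull of a finite set of points. -/
def IsPolytope {ι : Type*} (P : Set (ι → ℝ)) : Prop :=
  ∃ S : Finset (ι → ℝ), P = convexHull ℝ (S : Set (ι → ℝ))

/-- `F` is a face of `P`: the set of points of `P` maximizing some linear functional. -/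
def IsFace {ι : Type*} (P F : Set (ι → ℝ)) : Prop :=
  ∃ (f : (ι → ℝ) →ₗ[ℝ] ℝ) (c : ℝ), (∀ x ∈ P, f x ≤ c) ∧ F = {x ∈ P | f x = c}

/-- The dimension of a polytope: the dimension of (the direction of) its affine hull. -/
def polyDim {ι : Type*} (P : Set (ι → ℝ)) : ℕ :=
  Module.finrank ℝ (vectorSpan ℝ P)

/-- A facet of a polytope: a proper face of codimension 1. -/
def IsFacet {ι : Type*} (P F : Set (ι → ℝ)) : Prop :=
  IsFace P F ∧ F ≠ P ∧ polyDim F + 1 = polyDim P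

/-- The number of facets of a polytope. -/
def facetCount {ι : Type*} (P : Set (ι → ℝ)) : ℕ :=
  Nat.card {F : Set (ι → ℝ) // IsFacet P F}

/-- `Q ⊆ ℝ^p` is an extension of `P`: a polytope mapping onto `P` under an affine map. -/
def IsExtensionOf {p : ℕ} {ι : Type*} (Q : Set (Fin p → ℝ)) (P : Set (ι → ℝ)) : Prop :=
  IsPolytope Q ∧ ∃ π : (Fin p → ℝ) →ᵃ[ℝ] (ι → ℝ), π '' Q = P

/-- The extension complexity of `P`: the minimum number of facets of an extension of `P`. -/
def xc {ι : Type*} (P : Set (ι → ℝ)) : ℕ :=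
  sInf { m | ∃ (p : ℕ) (Q : Set (Fin p → ℝ)), IsExtensionOf Q P ∧ facetCount Q = m }

open scoped Classical in
/-- The correlation polytope of a graph `G = (V,E)`: the convex hull in `ℝ^{V ∪ E}` of the
vectors `(χ(X), χ(E(X)))` over all vertex subsets `X ⊆ V`. -/
def corPolytope {V : Type*} (G : SimpleGraph V) : Set ((V ⊕ ↥G.edgeSet) → ℝ) :=
  convexHull ℝ {x | ∃ X : Set V,
    (∀ v : V, x (Sum.inl v) = if v ∈ X then 1 else 0) ∧
    (∀ e : G.edgeSet, x (Sum.inr e) = if ∀ v ∈ (e : Sym2 V), v ∈ X then 1 else 0)}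

/-- `H` is a minor of `G`: there are pairwise disjoint connected branch sets in `G`,
one for each vertex of `H`, with an edge of `G` between the branch sets of any two
vertices adjacent in `H`. -/
def SimpleGraph.IsMinorOf {W V : Type*} (H : SimpleGraph W) (G : SimpleGraph V) : Prop :=
  ∃ B : W → Set V,
    (∀ w, (G.induce (B w)).Connected) ∧
    (Pairwise fun w w' => Disjoint (B w) (B w')) ∧
    (∀ ⦃w w'⦄, H.Adj w w' → ∃ u ∈ B w, ∃ v ∈ B w', G.Adj u v)

/-- A tree-decomposition of a graph `G`. -/
structure TreeDecomp {V : Type*} (G : SimpleGraph V) where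
  ι : Type
  finite : Finite ι
  T : SimpleGraph ι
  isTree : T.IsTree
  B : ι → Set V
  bag_finite : ∀ t, (B t).Finite
  vertex_cover : ∀ v : V, ∃ t, v ∈ B t
  edge_cover : ∀ ⦃u v : V⦄, G.Adj u v → ∃ t, u ∈ B t ∧ v ∈ B t
  subtree : ∀ v : V, (T.induce {t | v ∈ B t}).Connected

/-- The width of a tree-decomposition: `max |B_t| - 1`. -/
def TreeDecomp.width {V : Type*} {G : SimpleGraph V} (D : TreeDecomp G) : ℕ :=
  (⨆ t, (D.B t).ncard) - 1

/-- The treewidth of a graph: minimum width of a tree-decomposition. -/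
def treewidth {V : Type*} (G : SimpleGraph V) : ℕ :=
  sInf { w | ∃ D : TreeDecomp G, D.width = w }

/-- The `t × t` grid graph: `(a,b)` adjacent to `(a',b')` iff `|a-a'| + |b-b'| = 1`. -/
def gridGraph (t : ℕ) : SimpleGraph (Fin t × Fin t) where
  Adj p q := ((p.1 : ℤ) - (q.1 : ℤ)).natAbs + ((p.2 : ℤ) - (q.2 : ℤ)).natAbs = 1
  symm := by constructor; intro p q h; omega
  loopless := by constructor; intro p h; omega

/-- The graph `G'` obtained from `G` by adding, for each edge `e = uv`, a new vertex
adjacent exactly to `u` and `v` (keeping all edges of `G`). -/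
def addEdgeVertices {V : Type*} (G : SimpleGraph V) : SimpleGraph (V ⊕ ↥G.edgeSet) where
  Adj a b :=
    match a, b with
    | Sum.inl u, Sum.inl v => G.Adj u v
    | Sum.inl u, Sum.inr e => u ∈ (e : Sym2 V)
    | Sum.inr e, Sum.inl u => u ∈ (e : Sym2 V)
    | Sum.inr _, Sum.inr _ => False
  symm := by
    constructor
    rintro (u | e) (v | f) h
    · exact h.symm
    · exact h
    · exact h
    · exact h
  loopless := by
    constructor
    rintro (u | e) h
    · exact G.loopless.irrefl u h
    · exact h

/-- The graph `G / uv` obtained from `G` by contracting the edge `uv`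
(the vertex `v` is merged into `u`). -/
def contractEdge {V : Type*} (G : SimpleGraph V) (u v : V) :
    SimpleGraph {w : V // w ≠ v} where
  Adj a b := a ≠ b ∧
    (G.Adj a.1 b.1 ∨ (a.1 = u ∧ G.Adj v b.1) ∨ (b.1 = u ∧ G.Adj a.1 v))
  symm := by
    constructor
    rintro a b ⟨hne, h⟩
    refine ⟨hne.symm, ?_⟩
    rcases h with h | ⟨h1, h2⟩ | ⟨h1, h2⟩
    · exact Or.inl h.symm
    · exact Or.inr (Or.inr ⟨h1, h2.symm⟩)
    · exact Or.inr (Or.inl ⟨h1, h2.symm⟩)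
  loopless := by constructor; rintro a ⟨hne, _⟩; exact hne rfl

lemma deleteEdges_edgeSet_subset {V : Type*} (G : SimpleGraph V) (s : Set (Sym2 V)) :
    (G.deleteEdges s).edgeSet ⊆ G.edgeSet := by
  rw [SimpleGraph.edgeSet_deleteEdges]
  exact Set.diff_subset

lemma induce_edge_mem {V : Type*} (G : SimpleGraph V) (s : Set V) (e : Sym2 ↥s)
    (he : e ∈ (G.induce s).edgeSet) : Sym2.map Subtype.val e ∈ G.edgeSet := by
  induction e using Sym2.ind with
  | _ a b => simpa using he

/-!
`F` is cut out of `COR(G)` by the valid inequality `2 x_uv ≤ x_u + x_v`. Its vertices are the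
`χ(X)` with `u ∈ X ↔ v ∈ X`, i.e. with `X` the preimage of a vertex set of `G / uv`, and the
coordinate map that drops `v` and reads each edge of `G / uv` off an edge of `G` above it sends
them onto the vertices of `COR(G / uv)`.

For the extension complexity, the face of an optimal extension of `COR(G)` lying over `F` is an
extension of `F`, and a face of a polytope has at most as many facets as the polytope: every facet
of a facet `H` of `P` is cut out of `H` by another facet of `P`, found by rotating a supporting
hyperplane of it away from `H` and enlarging the resulting face to a facet.
-/

section ConvexGeometry

variable {E : Type*} [AddCommGroup E] [Module ℝ E]

lemma le_of_mem_convexHull {s : Set E} {f : E →ₗ[ℝ] ℝ} {c : ℝ} (hs : ∀ x ∈ s, f x ≤ c)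
    {x : E} (hx : x ∈ convexHull ℝ s) : f x ≤ c :=
  convexHull_min hs (convex_halfSpace_le f.isLinear c) hx

lemma eq_of_mem_convexHull {s : Set E} {f : E →ₗ[ℝ] ℝ} {c : ℝ} (hs : ∀ x ∈ s, f x = c)
    {x : E} (hx : x ∈ convexHull ℝ s) : f x = c :=
  convexHull_min hs (convex_hyperplane f.isLinear c) hx

lemma vectorSpan_le_ker {s : Set E} {f : E →ₗ[ℝ] ℝ} {c : ℝ} (hs : ∀ x ∈ s, f x = c) :
    vectorSpan ℝ s ≤ LinearMap.ker f := by
  rw [vectorSpan_def, Submodule.span_le]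
  rintro _ ⟨x, hx, y, hy, rfl⟩
  simp [hs x hx, hs y hy]

lemma convexHull_sep_eq {s : Set E} {f : E →ₗ[ℝ] ℝ} {c : ℝ} (hs : ∀ x ∈ s, f x ≤ c) :
    {x ∈ convexHull ℝ s | f x = c} = convexHull ℝ {x ∈ s | f x = c} := by
  refine Subset.antisymm ?_ fun x hx =>
    ⟨convexHull_mono (sep_subset _ _) hx, eq_of_mem_convexHull (fun _ hy => hy.2) hx⟩
  classical
  rintro x ⟨hx, hfx⟩
  rw [convexHull_eq] at hx
  obtain ⟨κ, t, w, z, hw0, hw1, hz, rfl⟩ := hx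
  rw [Finset.centerMass_eq_of_sum_1 _ _ hw1] at hfx ⊢
  -- `c - f x` is a convex combination of the nonnegative numbers `c - f (z i)`
  have hzero := (Finset.sum_eq_zero_iff_of_nonneg fun i hi =>
    mul_nonneg (hw0 i hi) (sub_nonneg.2 (hs _ (hz i hi)))).1 <| by
      simp [mul_sub, Finset.sum_sub_distrib, ← Finset.sum_mul, hw1, ← hfx]
  rw [← Finset.sum_filter_of_ne (p := (w · ≠ 0)) fun i _ h hwi => by simp [hwi] at h]
  refine (convex_convexHull ℝ _).sum_mem (fun i hi => hw0 i (Finset.mem_filter.1 hi).1)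
    (by rwa [Finset.sum_filter_ne_zero]) fun i hi => subset_convexHull ℝ _ ?_
  obtain ⟨hi, hwi⟩ := Finset.mem_filter.1 hi
  exact ⟨hz i hi, (sub_eq_zero.1 ((mul_eq_zero.1 (hzero i hi)).resolve_left hwi)).symm⟩

/-- Rotating the supporting functional `h` about its face `{h = e}` in the direction of `l`
as far as possible: the face grows by a point where `l > c`, and by nothing where `l ≤ c`. -/
lemma exists_rotation {S : Finset E} {h l : E →ₗ[ℝ] ℝ} {e c : ℝ} (hh : ∀ s ∈ S, h s ≤ e)
    (hl : ∀ s ∈ S, h s = e → l s = c) (hpos : ∃ s ∈ S, c < l s) :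
    ∃ (h' : E →ₗ[ℝ] ℝ) (e' : ℝ), (∀ s ∈ S, h' s ≤ e') ∧ (∀ s ∈ S, h s = e → h' s = e') ∧
      (∃ s ∈ S, c < l s ∧ h' s = e') ∧ (∀ s ∈ S, h' s = e' → h s = e ∨ c < l s) := by
  set A := S.filter (c < l ·)
  have hAne : A.Nonempty := by
    obtain ⟨s, hs, hls⟩ := hpos
    exact ⟨s, Finset.mem_filter.2 ⟨hs, hls⟩⟩
  have hlt : ∀ s ∈ A, h s < e ∧ c < l s := fun s hs => by
    obtain ⟨hs, hls⟩ := Finset.mem_filter.1 hs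
    exact ⟨(hh s hs).lt_of_ne fun he => hls.ne' (hl s hs he), hls⟩
  set t := A.inf' hAne fun s => (e - h s) / (l s - c)
  have ht : 0 < t := (Finset.lt_inf'_iff _).2 fun s hs =>
    div_pos (sub_pos.2 (hlt s hs).1) (sub_pos.2 (hlt s hs).2)
  have hle : ∀ s ∈ A, t * (l s - c) ≤ e - h s := fun s hs =>
    (le_div_iff₀ (sub_pos.2 (hlt s hs).2)).1 (Finset.inf'_le _ hs)
  refine ⟨h + t • l, e + t * c, fun s hs => ?_, fun s hs he => ?_, ?_, fun s hs he => ?_⟩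
  · simp only [LinearMap.add_apply, LinearMap.smul_apply, smul_eq_mul]
    by_cases hls : c < l s
    · nlinarith [hle s (Finset.mem_filter.2 ⟨hs, hls⟩)]
    · nlinarith [hh s hs]
  · simp [he, hl s hs he]
  · obtain ⟨s, hs, hst⟩ := Finset.exists_mem_eq_inf' hAne fun s => (e - h s) / (l s - c)
    obtain ⟨hsS, hls⟩ := Finset.mem_filter.1 hs
    refine ⟨s, hsS, hls, ?_⟩
    have hts : t * (l s - c) = e - h s := by
      rw [show t = (e - h s) / (l s - c) from hst, div_mul_cancel₀ _ (sub_pos.2 hls).ne']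
    simp only [LinearMap.add_apply, LinearMap.smul_apply, smul_eq_mul]
    linarith
  · simp only [LinearMap.add_apply, LinearMap.smul_apply, smul_eq_mul] at he
    by_contra! hne
    nlinarith [(hh s hs).lt_of_ne hne.1]

open Filter Topology in
/-- Tilting `f` slightly by `g` exposes the face `{g = d}` of the face `{f = c}`. -/
lemma exists_functional_eq_iff_and {S : Finset E} {f g : E →ₗ[ℝ] ℝ} {c d : ℝ}
    (hf : ∀ s ∈ S, f s ≤ c) (hg : ∀ s ∈ S, f s = c → g s ≤ d) :
    ∃ (h : E →ₗ[ℝ] ℝ) (e : ℝ), (∀ s ∈ S, h s ≤ e) ∧ ∀ s ∈ S, (h s = e ↔ f s = c ∧ g s = d) := by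
  have hsmall : ∀ᶠ ε in 𝓝[>] (0 : ℝ), 0 < ε ∧ ∀ s ∈ S, f s < c → ε * (g s - d) < c - f s := by
    refine eventually_mem_nhdsWithin.and (nhdsWithin_le_nhds ?_)
    refine (Filter.eventually_all_finset S).2 fun s _ => ?_
    by_cases hs : f s < c
    · have hcont : Continuous fun ε : ℝ => ε * (g s - d) := by fun_prop
      exact (hcont.tendsto' 0 0 (zero_mul _)).eventually (gt_mem_nhds (sub_pos.2 hs))
        |>.mono fun _ h _ => h
    · exact .of_forall fun _ h => absurd h hs
  obtain ⟨ε, hε, hεs⟩ := hsmall.exists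
  refine ⟨f + ε • g, c + ε * d, fun s hs => ?_, fun s hs => ?_⟩ <;>
    simp only [LinearMap.add_apply, LinearMap.smul_apply, smul_eq_mul]
  · rcases (hf s hs).lt_or_eq with hlt | heq
    · nlinarith [hεs s hs hlt]
    · nlinarith [hg s hs heq]
  · rcases (hf s hs).lt_or_eq with hlt | heq
    · exact iff_of_false (by linarith [hεs s hs hlt]) fun h => hlt.ne h.1
    · simp [heq, hε.ne']

lemma exists_vsub_notMem_of_finrank_lt [FiniteDimensional ℝ E] {S : Set E} {t₀ : E}
    (ht₀ : t₀ ∈ S) {U : Submodule ℝ E}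
    (hU : Module.finrank ℝ U < Module.finrank ℝ (vectorSpan ℝ S)) : ∃ s ∈ S, s - t₀ ∉ U := by
  by_contra! hS
  refine hU.not_ge (Submodule.finrank_mono ?_)
  rw [vectorSpan_eq_span_vsub_set_right ℝ ht₀, Submodule.span_le]
  rintro _ ⟨s, hs, rfl⟩
  exact hS s hs

lemma exists_functional_const_of_finrank_add_two_le [FiniteDimensional ℝ E] {T S : Set E}
    (hTS : T ⊆ S) {t₀ : E} (ht₀ : t₀ ∈ T)
    (hdim : Module.finrank ℝ (vectorSpan ℝ T) + 2 ≤ Module.finrank ℝ (vectorSpan ℝ S)) :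
    ∃ l : E →ₗ[ℝ] ℝ, (∀ s ∈ T, l s = l t₀) ∧ (∃ s ∈ S, l t₀ < l s) ∧
      ∃ s ∈ S \ T, l s = l t₀ := by
  set W := vectorSpan ℝ T
  have hW : ∀ s ∈ T, s - t₀ ∈ W := fun s hs => vsub_mem_vectorSpan ℝ hs ht₀
  obtain ⟨s₂, hs₂, hs₂W⟩ := exists_vsub_notMem_of_finrank_lt (hTS ht₀) (U := W) (by omega)
  set U := W ⊔ Submodule.span ℝ {s₂ - t₀}
  have hU : Module.finrank ℝ U < Module.finrank ℝ (vectorSpan ℝ S) :=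
    calc Module.finrank ℝ U ≤ Module.finrank ℝ W + Module.finrank ℝ (ℝ ∙ (s₂ - t₀)) :=
          Submodule.finrank_add_le_finrank_add_finrank _ _
      _ ≤ Module.finrank ℝ W + 1 := by gcongr; simpa using finrank_span_le_card ({s₂ - t₀} : Set E)
      _ < _ := by omega
  obtain ⟨s₁, hs₁, hs₁U⟩ := exists_vsub_notMem_of_finrank_lt (hTS ht₀) hU
  obtain ⟨φ, hφ, hφU⟩ := Submodule.exists_dual_map_eq_bot_of_notMem hs₁U inferInstance
  have hφ0 : ∀ x ∈ U, φ x = 0 := fun x hx =>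
    (Submodule.mem_bot ℝ).1 (hφU ▸ Submodule.mem_map_of_mem hx)
  set l := (φ (s₁ - t₀))⁻¹ • φ
  have hl : ∀ s, l s - l t₀ = (φ (s₁ - t₀))⁻¹ * φ (s - t₀) := fun s => by
    simp [l, mul_sub]
  refine ⟨l, fun s hs => ?_, ⟨s₁, hs₁, ?_⟩, s₂, ⟨hs₂, fun hs₂T => hs₂W (hW s₂ hs₂T)⟩, ?_⟩
  · have := hl s
    rw [hφ0 _ (Submodule.mem_sup_left (hW s hs)), mul_zero] at this
    linarith
  · have := hl s₁
    rw [inv_mul_cancel₀ hφ] at this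
    linarith
  · have := hl s₂
    rw [hφ0 _ (Submodule.mem_sup_right (Submodule.mem_span_singleton_self _)), mul_zero] at this
    linarith

end ConvexGeometry

section Faces

variable {ι : Type*}

lemma IsFace.subset {P F : Set (ι → ℝ)} (hF : IsFace P F) : F ⊆ P := by
  obtain ⟨f, c, -, rfl⟩ := hF
  exact sep_subset _ _

lemma IsFace.inter_of_subset {P F Q : Set (ι → ℝ)} (hF : IsFace P F) (hQ : Q ⊆ P) :
    IsFace Q (Q ∩ F) := by
  obtain ⟨f, c, hle, rfl⟩ := hF
  exact ⟨f, c, fun x hx => hle x (hQ hx), by ext x; simpa using fun hx _ => hQ hx⟩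

lemma IsFace.eq_of_subset_of_polyDim_le [Finite ι] {Q F F₂ : Set (ι → ℝ)} (hF : IsFace Q F)
    (hne : F.Nonempty) (hFF₂ : F ⊆ F₂) (hF₂ : F₂ ⊆ Q) (hdim : polyDim F₂ ≤ polyDim F) :
    F = F₂ := by
  obtain ⟨f, c, -, rfl⟩ := hF
  obtain ⟨p, hp⟩ := hne
  have hspan : vectorSpan ℝ F₂ ≤ LinearMap.ker f :=
    (Submodule.eq_of_le_of_finrank_le (vectorSpan_mono ℝ hFF₂) hdim) ▸
      vectorSpan_le_ker fun x hx => hx.2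
  refine hFF₂.antisymm fun x hx => ⟨hF₂ hx, ?_⟩
  have := hspan (vsub_mem_vectorSpan ℝ hx (hFF₂ hp))
  rw [LinearMap.mem_ker, vsub_eq_sub, map_sub, hp.2, sub_eq_zero] at this
  exact this

lemma IsFace.polyDim_lt [Finite ι] {Q F F₂ : Set (ι → ℝ)} (hF : IsFace Q F)
    (hne : F.Nonempty) (hFF₂ : F ⊂ F₂) (hF₂ : F₂ ⊆ Q) : polyDim F < polyDim F₂ :=
  lt_of_not_ge fun hdim => hFF₂.ne (hF.eq_of_subset_of_polyDim_le hne hFF₂.subset hF₂ hdim)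

lemma polyDim_convexHull (s : Set (ι → ℝ)) :
    polyDim (convexHull ℝ s) = Module.finrank ℝ (vectorSpan ℝ s) := by
  rw [polyDim, ← direction_affineSpan, affineSpan_convexHull, direction_affineSpan]

lemma polyDim_mono [Finite ι] {s t : Set (ι → ℝ)} (h : s ⊆ t) : polyDim s ≤ polyDim t :=
  Submodule.finrank_mono (vectorSpan_mono ℝ h)

variable {S : Finset (ι → ℝ)}

lemma isFace_convexHull_filter {f : (ι → ℝ) →ₗ[ℝ] ℝ} {c : ℝ} (hS : ∀ s ∈ S, f s ≤ c) :
    IsFace (convexHull ℝ (S : Set (ι → ℝ))) (convexHull ℝ (S.filter (f · = c) : Set (ι → ℝ))) :=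
  ⟨f, c, fun _ hx => le_of_mem_convexHull hS hx, by
    rw [convexHull_sep_eq hS, Finset.coe_filter]; rfl⟩

lemma isFace_convexHull_iff {F : Set (ι → ℝ)} :
    IsFace (convexHull ℝ (S : Set (ι → ℝ))) F ↔
      ∃ (f : (ι → ℝ) →ₗ[ℝ] ℝ) (c : ℝ), (∀ s ∈ S, f s ≤ c) ∧ F = convexHull ℝ (S.filter (f · = c) : Set (ι → ℝ)) := by
  refine ⟨?_, fun ⟨f, c, hS, hF⟩ => hF ▸ isFace_convexHull_filter hS⟩
  rintro ⟨f, c, hle, rfl⟩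
  have hS : ∀ s ∈ S, f s ≤ c := fun s hs => hle s (subset_convexHull ℝ _ hs)
  exact ⟨f, c, hS, by rw [convexHull_sep_eq hS, Finset.coe_filter]; rfl⟩

lemma mem_convexHull_filter {f : (ι → ℝ) →ₗ[ℝ] ℝ} {c : ℝ} {s : ι → ℝ} (hs : s ∈ S)
    (hfs : f s = c) : s ∈ convexHull ℝ (S.filter (f · = c) : Set (ι → ℝ)) :=
  subset_convexHull ℝ _ (Finset.mem_filter.2 ⟨hs, hfs⟩)

lemma eq_of_mem_convexHull_filter {f : (ι → ℝ) →ₗ[ℝ] ℝ} {c : ℝ} {x : ι → ℝ}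
    (hx : x ∈ convexHull ℝ (S.filter (f · = c) : Set (ι → ℝ))) : f x = c :=
  eq_of_mem_convexHull (fun _ hy => (Finset.mem_filter.1 hy).2) hx

lemma exists_ne_of_convexHull_filter_ne {f : (ι → ℝ) →ₗ[ℝ] ℝ} {c : ℝ}
    (hne : convexHull ℝ (S.filter (f · = c) : Set (ι → ℝ)) ≠ convexHull ℝ (S : Set (ι → ℝ))) :
    ∃ s ∈ S, f s ≠ c := by
  by_contra! h
  exact hne (by rw [Finset.filter_true_of_mem h])

lemma IsFace.trans {P H F : Set (ι → ℝ)} (hP : IsPolytope P) (hH : IsFace P H)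
    (hF : IsFace H F) : IsFace P F := by
  obtain ⟨S, rfl⟩ := hP
  obtain ⟨f, c, hf, rfl⟩ := isFace_convexHull_iff.1 hH
  obtain ⟨g, d, hg, rfl⟩ := isFace_convexHull_iff.1 hF
  obtain ⟨h, e, hh, hhe⟩ := exists_functional_eq_iff_and hf fun s hs hfs =>
    hg s (Finset.mem_filter.2 ⟨hs, hfs⟩)
  refine isFace_convexHull_iff.2 ⟨h, e, hh, ?_⟩
  rw [Finset.filter_filter, Finset.filter_congr fun s hs => (hhe s hs).symm]

lemma IsPolytope.of_isFace {P F : Set (ι → ℝ)} (hP : IsPolytope P) (hF : IsFace P F) :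
    IsPolytope F := by
  obtain ⟨S, rfl⟩ := hP
  obtain ⟨f, c, -, rfl⟩ := isFace_convexHull_iff.1 hF
  exact ⟨_, rfl⟩

lemma exists_isFace_polyDim_lt [Finite ι] {P F : Set (ι → ℝ)} (hP : IsPolytope P)
    (hF : IsFace P F) (hne : F.Nonempty) (hdim : polyDim F + 2 ≤ polyDim P) :
    ∃ F', IsFace P F' ∧ F ⊆ F' ∧ F' ≠ P ∧ polyDim F < polyDim F' := by
  obtain ⟨S, rfl⟩ := hP
  obtain ⟨h, e, hh, rfl⟩ := isFace_convexHull_iff.1 hF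
  obtain ⟨t₀, ht₀⟩ := convexHull_nonempty_iff.1 hne
  rw [polyDim_convexHull, polyDim_convexHull] at hdim
  obtain ⟨l, hlT, ⟨s₁, hs₁, hls₁⟩, s₂, ⟨hs₂, hs₂T⟩, hls₂⟩ :=
    exists_functional_const_of_finrank_add_two_le
      (Finset.coe_subset.2 (Finset.filter_subset _ _)) ht₀ hdim
  obtain ⟨h', e', hh', hhh', ⟨s, hs, hls, hh's⟩, hh'h⟩ := exists_rotation hh
    (fun s hs hhs => hlT s (Finset.mem_filter.2 ⟨hs, hhs⟩)) ⟨s₁, hs₁, hls₁⟩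
  have hsub : convexHull ℝ (S.filter (h · = e) : Set (ι → ℝ)) ⊆
      convexHull ℝ (S.filter (h' · = e') : Set (ι → ℝ)) :=
    convexHull_mono fun x hx => Finset.mem_filter.2
      ⟨(Finset.mem_filter.1 hx).1, hhh' x (Finset.mem_filter.1 hx).1 (Finset.mem_filter.1 hx).2⟩
  refine ⟨_, isFace_convexHull_filter hh', hsub, fun heq => ?_, hF.polyDim_lt hne
    ⟨hsub, fun hsup => hls.ne' ?_⟩ (isFace_convexHull_filter hh').subset⟩
  · have := eq_of_mem_convexHull_filter (heq ▸ subset_convexHull ℝ _ hs₂ :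
      s₂ ∈ convexHull ℝ (S.filter (h' · = e') : Set (ι → ℝ)))
    rcases hh'h s₂ hs₂ this with hhs₂ | hls₂'
    · exact hs₂T (Finset.mem_filter.2 ⟨hs₂, hhs₂⟩)
    · exact hls₂'.ne' hls₂
  · exact hlT s (Finset.mem_filter.2 ⟨hs, eq_of_mem_convexHull_filter (hsup
      (mem_convexHull_filter hs hh's))⟩)

lemma exists_isFacet_superset [Finite ι] {P F : Set (ι → ℝ)} (hP : IsPolytope P)
    (hF : IsFace P F) (hne : F.Nonempty) (hFP : F ≠ P) : ∃ H, IsFacet P H ∧ F ⊆ H := by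
  induction hn : polyDim P - polyDim F using Nat.strong_induction_on generalizing F with
  | _ n ih =>
  have hlt := hF.polyDim_lt hne (hF.subset.ssubset_of_ne hFP) subset_rfl
  by_cases hfacet : polyDim F + 1 = polyDim P
  · exact ⟨F, ⟨hF, hFP, hfacet⟩, subset_rfl⟩
  obtain ⟨F', hF', hFF', hF'P, hdim⟩ := exists_isFace_polyDim_lt hP hF hne (by omega)
  have := polyDim_mono hF'.subset
  obtain ⟨H, hH, hF'H⟩ := ih _ (by omega) hF' (hne.mono hFF') hF'P rfl
  exact ⟨H, hH, hFF'.trans hF'H⟩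

lemma exists_isFace_superset_not_subset {P H F : Set (ι → ℝ)} (hP : IsPolytope P)
    (hH : IsFace P H) (hHP : H ≠ P) (hF : IsFace H F) (hFH : F ≠ H) :
    ∃ F', IsFace P F' ∧ F ⊆ F' ∧ ¬F' ⊆ H ∧ F' ≠ P := by
  have hFP := hH.trans hP hF
  have hFsub := hF.subset
  obtain ⟨S, rfl⟩ := hP
  obtain ⟨f, c, hf, rfl⟩ := isFace_convexHull_iff.1 hH
  obtain ⟨h, e, hh, rfl⟩ := isFace_convexHull_iff.1 hFP
  have hhf : ∀ s ∈ S, h s = e → f s = c := fun s hs hhs =>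
    eq_of_mem_convexHull_filter (hFsub (mem_convexHull_filter hs hhs))
  obtain ⟨s₀, hs₀, hfs₀⟩ := exists_ne_of_convexHull_filter_ne hHP
  obtain ⟨s₂, hs₂, hfs₂, hhs₂⟩ : ∃ s ∈ S, f s = c ∧ h s ≠ e := by
    by_contra! hfh
    exact hFH (by rw [Finset.filter_congr fun s hs => ⟨hhf s hs, hfh s hs⟩])
  -- rotate the functional of `F` about `F`, away from `H`
  obtain ⟨h', e', hh', hhh', ⟨s, hs, hfs, hh's⟩, hh'h⟩ := exists_rotation (l := -f) (c := -c) hh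
    (fun s hs hhs => by simp [hhf s hs hhs]) ⟨s₀, hs₀, by simpa using (hf s₀ hs₀).lt_of_ne hfs₀⟩
  refine ⟨_, isFace_convexHull_filter hh', convexHull_mono fun x hx => ?_, fun hsub => ?_,
    fun heq => ?_⟩
  · obtain ⟨hxS, hhx⟩ := Finset.mem_filter.1 hx
    exact Finset.mem_filter.2 ⟨hxS, hhh' x hxS hhx⟩
  · have := eq_of_mem_convexHull_filter (hsub (mem_convexHull_filter hs hh's))
    simp [this] at hfs
  · have := eq_of_mem_convexHull_filter (heq ▸ subset_convexHull ℝ _ hs₂ :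
      s₂ ∈ convexHull ℝ (S.filter (h' · = e') : Set (ι → ℝ)))
    rcases hh'h s₂ hs₂ this with h₂ | h₂
    · exact hhs₂ h₂
    · simp [hfs₂] at h₂

lemma IsFacet.exists_isFacet_inter_eq [Finite ι] {P H F : Set (ι → ℝ)} (hP : IsPolytope P)
    (hH : IsFacet P H) (hF : IsFacet H F) (hne : F.Nonempty) :
    ∃ H', IsFacet P H' ∧ H ∩ H' = F := by
  obtain ⟨F', hF', hFF', hF'H, hF'P⟩ :=
    exists_isFace_superset_not_subset hP hH.1 hH.2.1 hF.1 hF.2.1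
  obtain ⟨H', hH', hF'H'⟩ := exists_isFacet_superset hP hF' (hne.mono hFF') hF'P
  have hFsub : F ⊆ H ∩ H' := subset_inter hF.1.subset (hFF'.trans hF'H')
  have hproper : H ∩ H' ⊂ H := by
    refine inter_subset_left.ssubset_of_ne fun hHH' => hF'H ?_
    have hHeq : H = H' := hH.1.eq_of_subset_of_polyDim_le (hne.mono hF.1.subset)
      (inter_eq_left.1 hHH') hH'.1.subset (by have := hH.2.2; have := hH'.2.2; omega)
    exact hHeq ▸ hF'H'
  have := (hH'.1.inter_of_subset hH.1.subset).polyDim_lt (hne.mono hFsub) hproper subset_rfl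
  exact ⟨H', hH', (hF.1.eq_of_subset_of_polyDim_le hne hFsub inter_subset_left
    (by have := hF.2.2; omega)).symm⟩

lemma IsPolytope.finite_isFacet {P : Set (ι → ℝ)} (hP : IsPolytope P) :
    Finite {F // IsFacet P F} := by
  obtain ⟨S, rfl⟩ := hP
  refine Set.Finite.to_subtype ((S.powerset.finite_toSet.image
    fun T : Finset (ι → ℝ) => convexHull ℝ (T : Set (ι → ℝ))).subset ?_)
  rintro F ⟨hF, -⟩
  obtain ⟨f, c, -, rfl⟩ := isFace_convexHull_iff.1 hF
  exact ⟨_, Finset.mem_powerset.2 (Finset.filter_subset _ S), rfl⟩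

lemma facetCount_empty : facetCount (∅ : Set (ι → ℝ)) = 0 := by
  rw [facetCount, Nat.card_eq_zero]
  exact Or.inl ⟨fun ⟨F, hF, hFP, _⟩ => hFP (subset_empty_iff.1 hF.subset)⟩

/-- A facet `F` of `H` is sent to a facet of `P` cutting it out of `H`, or to `H` if `F = ∅`. -/
lemma IsFacet.facetCount_le [Finite ι] {P H : Set (ι → ℝ)} (hP : IsPolytope P)
    (hH : IsFacet P H) : facetCount H ≤ facetCount P := by
  have := hP.finite_isFacet
  have hext : ∀ F : {F // IsFacet H F}, ∃ H' : {H' // IsFacet P H'},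
      (F : Set (ι → ℝ)) = if (H' : Set (ι → ℝ)) = H then ∅ else H ∩ H' := by
    rintro ⟨F, hF⟩
    rcases F.eq_empty_or_nonempty with rfl | hne
    · exact ⟨⟨H, hH⟩, by simp⟩
    obtain ⟨H', hH', hHH'⟩ := hH.exists_isFacet_inter_eq hP hF hne
    have hH'H : H' ≠ H := by rintro rfl; exact hF.2.1 (by rw [← hHH', inter_self])
    exact ⟨⟨H', hH'⟩, by simp [hH'H, hHH']⟩
  choose Φ hΦ using hext
  exact Nat.card_le_card_of_injective Φ fun F₁ F₂ h =>
    Subtype.ext ((hΦ F₁).trans (h ▸ hΦ F₂).symm)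

lemma IsFace.facetCount_le [Finite ι] {P F : Set (ι → ℝ)} (hP : IsPolytope P) (hF : IsFace P F) :
    facetCount F ≤ facetCount P := by
  induction hn : polyDim P using Nat.strong_induction_on generalizing P F with
  | _ n ih =>
  rcases F.eq_empty_or_nonempty with rfl | hne
  · simp [facetCount_empty]
  by_cases hFP : F = P
  · rw [hFP]
  obtain ⟨H, hH, hFH⟩ := exists_isFacet_superset hP hF hne hFP
  have hFH' : IsFace H F := by simpa [inter_eq_right.2 hFH] using hF.inter_of_subset hH.1.subset
  calc facetCount F ≤ facetCount H :=
        ih _ (by have := hH.2.2; omega) (hP.of_isFace hH.1) hFH' rfl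
    _ ≤ facetCount P := hH.facetCount_le hP

end Faces

section ExtensionComplexity

variable {ι κ : Type*}

lemma IsFace.inter_preimage {P F : Set (ι → ℝ)} {Q : Set (κ → ℝ)} (hF : IsFace P F)
    (σ : (κ → ℝ) →ᵃ[ℝ] (ι → ℝ)) (hσ : σ '' Q = P) : IsFace Q (Q ∩ σ ⁻¹' F) := by
  obtain ⟨f, c, hle, rfl⟩ := hF
  have hfσ : ∀ y, f (σ y) = f (σ.linear y) + f (σ 0) := fun y => by
    rw [← map_add, congrFun σ.decomp y, Pi.add_apply]
  refine ⟨f ∘ₗ σ.linear, c - f (σ 0), fun y hy => ?_, ?_⟩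
  · have := hle _ (hσ ▸ mem_image_of_mem σ hy)
    simp only [LinearMap.comp_apply]
    linarith [hfσ y]
  · ext y
    simp only [mem_inter_iff, mem_preimage, mem_sep_iff, LinearMap.comp_apply]
    constructor
    · rintro ⟨hy, -, h⟩
      exact ⟨hy, by linarith [hfσ y]⟩
    · rintro ⟨hy, h⟩
      exact ⟨hy, hσ ▸ mem_image_of_mem σ hy, by linarith [hfσ y]⟩

lemma IsPolytope.exists_isExtensionOf [Finite ι] {P : Set (ι → ℝ)} (hP : IsPolytope P) :
    ∃ (p : ℕ) (Q : Set (Fin p → ℝ)), IsExtensionOf Q P := by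
  have := Fintype.ofFinite ι
  let e := LinearEquiv.funCongrLeft ℝ ℝ (Fintype.equivFin ι)
  obtain ⟨S, rfl⟩ := hP
  refine ⟨_, e.symm '' convexHull ℝ (S : Set (ι → ℝ)), ⟨S.image e.symm, ?_⟩,
    e.toLinearMap.toAffineMap, ?_⟩
  · rw [Finset.coe_image]
    exact e.symm.toLinearMap.image_convexHull _
  · simp [image_image]

lemma xc_le_facetCount {p : ℕ} {P : Set (ι → ℝ)} {Q : Set (Fin p → ℝ)} (h : IsExtensionOf Q P) :
    xc P ≤ facetCount Q :=
  Nat.sInf_le ⟨p, Q, h, rfl⟩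

lemma IsPolytope.exists_facetCount_eq_xc [Finite ι] {P : Set (ι → ℝ)} (hP : IsPolytope P) :
    ∃ (p : ℕ) (Q : Set (Fin p → ℝ)), IsExtensionOf Q P ∧ facetCount Q = xc P := by
  obtain ⟨p, Q, hQ⟩ := hP.exists_isExtensionOf
  exact Nat.sInf_mem (s := {m | ∃ (p : ℕ) (Q : Set (Fin p → ℝ)), IsExtensionOf Q P ∧
    facetCount Q = m}) ⟨_, p, Q, hQ, rfl⟩

/-- The face of an optimal extension lying over `F` is an extension of `F`, and of `π '' F`. -/
lemma xc_image_le_of_isFace [Finite ι] {P F : Set (ι → ℝ)} (hP : IsPolytope P) (hF : IsFace P F)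
    (π : (ι → ℝ) →ᵃ[ℝ] (κ → ℝ)) : xc (π '' F) ≤ xc P := by
  obtain ⟨p, Q, ⟨hQ, σ, hσ⟩, hxc⟩ := hP.exists_facetCount_eq_xc
  have hQF := hF.inter_preimage σ hσ
  have hext : IsExtensionOf (Q ∩ σ ⁻¹' F) (π '' F) := ⟨hQ.of_isFace hQF, π.comp σ, by
    rw [AffineMap.coe_comp, image_comp, image_inter_preimage, hσ, inter_eq_right.2 hF.subset]⟩
  calc xc (π '' F) ≤ facetCount (Q ∩ σ ⁻¹' F) := xc_le_facetCount hext
    _ ≤ facetCount Q := hQF.facetCount_le hQ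
    _ = xc P := hxc

end ExtensionComplexity

section CorrelationPolytope

variable {V : Type*} (G : SimpleGraph V)

open scoped Classical in
def corVertex (X : Set V) : (V ⊕ G.edgeSet) → ℝ :=
  Sum.elim (fun w => if w ∈ X then 1 else 0)
    fun e => if ∀ w ∈ (e : Sym2 V), w ∈ X then 1 else 0

lemma corPolytope_eq_convexHull_range :
    corPolytope G = convexHull ℝ (range (corVertex G)) := by
  rw [corPolytope]
  congr 1
  ext x
  constructor
  · rintro ⟨X, hV, hE⟩
    exact ⟨X, funext (Sum.rec (fun w => (hV w).symm) fun e => (hE e).symm)⟩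
  · rintro ⟨X, rfl⟩
    exact ⟨X, fun _ => rfl, fun _ => rfl⟩

lemma isPolytope_corPolytope [Finite V] : IsPolytope (corPolytope G) :=
  ⟨(finite_range (corVertex G)).toFinset, by
    rw [corPolytope_eq_convexHull_range, Finite.coe_toFinset]⟩

lemma corPolytope_apply_inr_le {x : (V ⊕ G.edgeSet) → ℝ} (hx : x ∈ corPolytope G)
    (e : G.edgeSet) {w : V} (hw : w ∈ (e : Sym2 V)) : x (Sum.inr e) ≤ x (Sum.inl w) := by
  rw [corPolytope_eq_convexHull_range] at hx
  have := le_of_mem_convexHull (f := LinearMap.proj (R := ℝ) (φ := fun _ => ℝ) (Sum.inr e) -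
    LinearMap.proj (Sum.inl w)) (c := 0) ?_ hx
  · simpa [sub_nonpos] using this
  rintro _ ⟨X, rfl⟩
  simp only [LinearMap.sub_apply, LinearMap.proj_apply, corVertex, Sum.elim_inl, Sum.elim_inr]
  split_ifs with he hwX <;> first | exact absurd (he w hw) hwX | norm_num

variable {G} {u v : V}

def edgeFunctional (huv : G.Adj u v) : ((V ⊕ G.edgeSet) → ℝ) →ₗ[ℝ] ℝ :=
  2 • LinearMap.proj (Sum.inr ⟨s(u, v), G.mem_edgeSet.mpr huv⟩) - LinearMap.proj (Sum.inl u) -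
    LinearMap.proj (Sum.inl v)

lemma edgeFunctional_apply (huv : G.Adj u v) (x : (V ⊕ G.edgeSet) → ℝ) :
    edgeFunctional huv x =
      2 * x (Sum.inr ⟨s(u, v), G.mem_edgeSet.mpr huv⟩) - x (Sum.inl u) - x (Sum.inl v) := by
  simp [edgeFunctional, two_mul]

lemma corPolytope_apply_edge_le (huv : G.Adj u v) {x : (V ⊕ G.edgeSet) → ℝ}
    (hx : x ∈ corPolytope G) :
    x (Sum.inr ⟨s(u, v), G.mem_edgeSet.mpr huv⟩) ≤ x (Sum.inl u) ∧
      x (Sum.inr ⟨s(u, v), G.mem_edgeSet.mpr huv⟩) ≤ x (Sum.inl v) :=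
  ⟨corPolytope_apply_inr_le G hx _ (Sym2.mem_mk_left u v),
    corPolytope_apply_inr_le G hx _ (Sym2.mem_mk_right u v)⟩

lemma edgeFunctional_le (huv : G.Adj u v) {x : (V ⊕ G.edgeSet) → ℝ} (hx : x ∈ corPolytope G) :
    edgeFunctional huv x ≤ 0 := by
  obtain ⟨hu, hv⟩ := corPolytope_apply_edge_le huv hx
  rw [edgeFunctional_apply]
  linarith

lemma sep_edgeFunctional_eq_zero (huv : G.Adj u v) :
    {x ∈ corPolytope G | edgeFunctional huv x = 0} = {x ∈ corPolytope G |
      x (Sum.inl u) = x (Sum.inr ⟨s(u, v), G.mem_edgeSet.mpr huv⟩) ∧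
      x (Sum.inr ⟨s(u, v), G.mem_edgeSet.mpr huv⟩) = x (Sum.inl v)} := by
  ext x
  simp only [mem_sep_iff, edgeFunctional_apply, and_congr_right_iff]
  intro hx
  obtain ⟨hu, hv⟩ := corPolytope_apply_edge_le huv hx
  constructor
  · intro h; constructor <;> linarith
  · rintro ⟨h₁, h₂⟩; linarith

lemma edgeFunctional_corVertex_eq_zero_iff (huv : G.Adj u v) (X : Set V) :
    edgeFunctional huv (corVertex G X) = 0 ↔ (u ∈ X ↔ v ∈ X) := by
  by_cases hu : u ∈ X <;> by_cases hv : v ∈ X <;>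
    norm_num [edgeFunctional_apply, corVertex, hu, hv]

end CorrelationPolytope

section Contraction

variable {V : Type*} {G : SimpleGraph V} {u v : V}

open scoped Classical in
def contractVertex (hne : u ≠ v) (w : V) : {w : V // w ≠ v} :=
  if h : w = v then ⟨u, hne⟩ else ⟨w, h⟩

lemma contractVertex_of_ne (hne : u ≠ v) {w : V} (hw : w ≠ v) :
    contractVertex hne w = ⟨w, hw⟩ :=
  dif_neg hw

lemma contractVertex_right (hne : u ≠ v) : contractVertex hne v = ⟨u, hne⟩ :=
  dif_pos rfl

lemma exists_map_contractVertex_eq (hne : u ≠ v) (e : (contractEdge G u v).edgeSet) :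
    ∃ e' ∈ G.edgeSet, Sym2.map (contractVertex hne) e' = e := by
  obtain ⟨e, he⟩ := e
  induction e using Sym2.ind with
  | _ a b =>
  obtain ⟨hab, hG | ⟨ha, hvb⟩ | ⟨hb, hav⟩⟩ := he
  · exact ⟨s(a.1, b.1), hG, by simp [contractVertex_of_ne hne a.2, contractVertex_of_ne hne b.2]⟩
  · refine ⟨s(v, b.1), hvb, ?_⟩
    rw [Sym2.map_mk, contractVertex_right, contractVertex_of_ne hne b.2]
    exact congrArg (s(·, b)) (Subtype.ext ha.symm)
  · refine ⟨s(a.1, v), hav, ?_⟩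
    rw [Sym2.map_mk, contractVertex_right, contractVertex_of_ne hne a.2]
    exact congrArg (s(a, ·)) (Subtype.ext hb.symm)

def liftEdge (hne : u ≠ v) (e : (contractEdge G u v).edgeSet) : G.edgeSet :=
  ⟨_, (exists_map_contractVertex_eq hne e).choose_spec.1⟩

lemma map_liftEdge (hne : u ≠ v) (e : (contractEdge G u v).edgeSet) :
    Sym2.map (contractVertex hne) (liftEdge hne e) = e :=
  (exists_map_contractVertex_eq hne e).choose_spec.2

def contractProj (hne : u ≠ v) :
    ((V ⊕ G.edgeSet) → ℝ) →ₗ[ℝ] (({w : V // w ≠ v} ⊕ (contractEdge G u v).edgeSet) → ℝ) :=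
  LinearMap.funLeft ℝ ℝ (Sum.map Subtype.val (liftEdge hne))

lemma contractProj_corVertex (hne : u ≠ v) (X : Set {w : V // w ≠ v}) :
    contractProj hne (corVertex G (contractVertex hne ⁻¹' X)) =
      corVertex (contractEdge G u v) X := by
  funext i
  rcases i with w | e
  · simp only [contractProj, corVertex, LinearMap.funLeft_apply, Sum.map_inl, Sum.elim_inl]
    congr 1
    simp [contractVertex_of_ne hne w.2]
  · simp only [contractProj, corVertex, LinearMap.funLeft_apply, Sum.map_inr, Sum.elim_inr]
    conv_rhs => rw [← map_liftEdge hne e]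
    congr 1
    simp [Sym2.mem_map]

lemma sep_range_corVertex_eq (huv : G.Adj u v) :
    {x ∈ range (corVertex G) | edgeFunctional huv x = 0} =
      range fun X => corVertex G (contractVertex huv.ne ⁻¹' X) := by
  ext x
  constructor
  · rintro ⟨⟨X, rfl⟩, hX⟩
    rw [edgeFunctional_corVertex_eq_zero_iff] at hX
    refine ⟨{w | w.1 ∈ X}, congrArg _ (ext fun z => ?_)⟩
    by_cases hz : z = v
    · subst hz
      simp [contractVertex_right, hX]
    · simp [contractVertex_of_ne huv.ne hz]
  · rintro ⟨X, rfl⟩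
    refine ⟨mem_range_self _, (edgeFunctional_corVertex_eq_zero_iff huv _).2 ?_⟩
    simp [contractVertex_right, contractVertex_of_ne huv.ne huv.ne]

lemma image_contractProj (huv : G.Adj u v) :
    contractProj huv.ne '' {x ∈ corPolytope G | edgeFunctional huv x = 0} =
      corPolytope (contractEdge G u v) := by
  have hle : ∀ x ∈ range (corVertex G), edgeFunctional huv x ≤ 0 := fun x hx =>
    edgeFunctional_le huv (corPolytope_eq_convexHull_range G ▸ subset_convexHull ℝ _ hx)
  rw [corPolytope_eq_convexHull_range G, convexHull_sep_eq hle, sep_range_corVertex_eq,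
    LinearMap.image_convexHull, ← range_comp, corPolytope_eq_convexHull_range]
  exact congrArg _ (congrArg range (funext (contractProj_corVertex huv.ne)))

end Contraction

/-- Contracting an edge: the set `F = {x ∈ COR(G) : x_u = x_{uv} = x_v}` is a face of
`COR(G)`, some affine map takes `F` onto `COR(G / uv)`, and consequently
`xc(COR(G / uv)) ≤ xc(COR(G))`. -/
theorem corPolytope_contractEdge {V : Type} [Fintype V] (G : SimpleGraph V)
    (u v : V) (huv : G.Adj u v)
    (F : Set ((V ⊕ ↥G.edgeSet) → ℝ))
    (hF : F = {x ∈ corPolytope G |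
      x (Sum.inl u) = x (Sum.inr ⟨s(u, v), G.mem_edgeSet.mpr huv⟩) ∧
      x (Sum.inr ⟨s(u, v), G.mem_edgeSet.mpr huv⟩) = x (Sum.inl v)}) :
    IsFace (corPolytope G) F ∧
    (∃ π : ((V ⊕ ↥G.edgeSet) → ℝ) →ᵃ[ℝ]
        (({w : V // w ≠ v} ⊕ ↥(contractEdge G u v).edgeSet) → ℝ),
      ⇑π '' F = corPolytope (contractEdge G u v)) ∧
    xc (corPolytope (contractEdge G u v)) ≤ xc (corPolytope G) := by
  have hface : IsFace (corPolytope G) {x ∈ corPolytope G | edgeFunctional huv x = 0} :=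
    ⟨edgeFunctional huv, 0, fun _ hx => edgeFunctional_le huv hx, rfl⟩
  rw [hF, ← sep_edgeFunctional_eq_zero huv]
  refine ⟨hface, ⟨(contractProj huv.ne).toAffineMap, image_contractProj huv⟩, ?_⟩
  rw [← image_contractProj huv]
  exact xc_image_le_of_isFace (isPolytope_corPolytope G) hface (contractProj huv.ne).toAffineMap
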